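/- arXiv:2205.12308 — 5 statements merged into one kernel-verified Lean document; each statement's English description precedes it below -/
import Mathlib

section
/- Let r ≥ 3 and s ≥ 3 be integers. Then the four functions θ3, η1, η2, η3 are linearly independent over ℂ in the complex vector space of all functions (M_{r×s})³ × (M_{s×r})² → M_{r×s}. -/
open Matrix

noncomputable def ip {r s : ℕ} (u : Matrix (Fin r) (Fin s) ℂ)
    (v : Matrix (Fin s) (Fin r) ℂ) : ℂ := (u * v).trace

/-- The value of the invariant vector-valued `(3,2)`-form `θ₃` at the base point. -/
noncomputable def theta3 {r s : ℕ} (u1 u2 u3 : Matrix (Fin r) (Fin s) ℂ)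
    (v1 v2 : Matrix (Fin s) (Fin r) ℂ) : Matrix (Fin r) (Fin s) ℂ :=
  (2 : ℂ) • ((ip u2 v1 * ip u3 v2 - ip u2 v2 * ip u3 v1) • u1
    - (ip u1 v1 * ip u3 v2 - ip u1 v2 * ip u3 v1) • u2
    + (ip u1 v1 * ip u2 v2 - ip u1 v2 * ip u2 v1) • u3)

/-- The value of the invariant vector-valued `(3,2)`-form `η₁` at the base point. -/
noncomputable def eta1 {r s : ℕ} (u1 u2 u3 : Matrix (Fin r) (Fin s) ℂ)
    (v1 v2 : Matrix (Fin s) (Fin r) ℂ) : Matrix (Fin r) (Fin s) ℂ :=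
  (2 : ℂ) • ((u1 * v1 * u2 * v2).trace • u3 + (u2 * v1 * u3 * v2).trace • u1
    + (u3 * v1 * u1 * v2).trace • u2 - (u2 * v1 * u1 * v2).trace • u3
    - (u3 * v1 * u2 * v2).trace • u1 - (u1 * v1 * u3 * v2).trace • u2)

/-- The value of the invariant vector-valued `(3,2)`-form `η₂` at the base point. -/
noncomputable def eta2 {r s : ℕ} (u1 u2 u3 : Matrix (Fin r) (Fin s) ℂ)
    (v1 v2 : Matrix (Fin s) (Fin r) ℂ) : Matrix (Fin r) (Fin s) ℂ :=
  ip u1 v1 • (u2 * v2 * u3) + ip u2 v1 • (u3 * v2 * u1) + ip u3 v1 • (u1 * v2 * u2)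
    - ip u2 v1 • (u1 * v2 * u3) - ip u3 v1 • (u2 * v2 * u1) - ip u1 v1 • (u3 * v2 * u2)
    - ip u1 v2 • (u2 * v1 * u3) - ip u2 v2 • (u3 * v1 * u1) - ip u3 v2 • (u1 * v1 * u2)
    + ip u2 v2 • (u1 * v1 * u3) + ip u3 v2 • (u2 * v1 * u1) + ip u1 v2 • (u3 * v1 * u2)

/-- The value of the invariant vector-valued `(3,2)`-form `η₃` at the base point. -/
noncomputable def eta3 {r s : ℕ} (u1 u2 u3 : Matrix (Fin r) (Fin s) ℂ)
    (v1 v2 : Matrix (Fin s) (Fin r) ℂ) : Matrix (Fin r) (Fin s) ℂ :=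
  u1 * v1 * u2 * v2 * u3 + u2 * v1 * u3 * v2 * u1 + u3 * v1 * u1 * v2 * u2
    - u2 * v1 * u1 * v2 * u3 - u3 * v1 * u2 * v2 * u1 - u1 * v1 * u3 * v2 * u2
    - u1 * v2 * u2 * v1 * u3 - u2 * v2 * u3 * v1 * u1 - u3 * v2 * u1 * v1 * u2
    + u2 * v2 * u1 * v1 * u3 + u3 * v2 * u2 * v1 * u1 + u1 * v2 * u3 * v1 * u2

/-- `θ₃` as a function on the product space `(M_{r×s})³ × (M_{s×r})²`. -/
noncomputable def Theta3F (r s : ℕ) :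
    (Matrix (Fin r) (Fin s) ℂ × Matrix (Fin r) (Fin s) ℂ × Matrix (Fin r) (Fin s) ℂ ×
      Matrix (Fin s) (Fin r) ℂ × Matrix (Fin s) (Fin r) ℂ) → Matrix (Fin r) (Fin s) ℂ :=
  fun p => theta3 p.1 p.2.1 p.2.2.1 p.2.2.2.1 p.2.2.2.2

/-- `η₁` as a function on the product space `(M_{r×s})³ × (M_{s×r})²`. -/
noncomputable def Eta1F (r s : ℕ) :
    (Matrix (Fin r) (Fin s) ℂ × Matrix (Fin r) (Fin s) ℂ × Matrix (Fin r) (Fin s) ℂ ×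
      Matrix (Fin s) (Fin r) ℂ × Matrix (Fin s) (Fin r) ℂ) → Matrix (Fin r) (Fin s) ℂ :=
  fun p => eta1 p.1 p.2.1 p.2.2.1 p.2.2.2.1 p.2.2.2.2

/-- `η₂` as a function on the product space `(M_{r×s})³ × (M_{s×r})²`. -/
noncomputable def Eta2F (r s : ℕ) :
    (Matrix (Fin r) (Fin s) ℂ × Matrix (Fin r) (Fin s) ℂ × Matrix (Fin r) (Fin s) ℂ ×
      Matrix (Fin s) (Fin r) ℂ × Matrix (Fin s) (Fin r) ℂ) → Matrix (Fin r) (Fin s) ℂ :=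
  fun p => eta2 p.1 p.2.1 p.2.2.1 p.2.2.2.1 p.2.2.2.2

/-- `η₃` as a function on the product space `(M_{r×s})³ × (M_{s×r})²`. -/
noncomputable def Eta3F (r s : ℕ) :
    (Matrix (Fin r) (Fin s) ℂ × Matrix (Fin r) (Fin s) ℂ × Matrix (Fin r) (Fin s) ℂ ×
      Matrix (Fin s) (Fin r) ℂ × Matrix (Fin s) (Fin r) ℂ) → Matrix (Fin r) (Fin s) ℂ :=
  fun p => eta3 p.1 p.2.1 p.2.2.1 p.2.2.2.1 p.2.2.2.2

/-! Evaluate the four forms at 5-tuples of matrix units built from three distinct row indices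
`a b c` and three distinct column indices `x y z`. For each form there is such a tuple at which the
other three forms vanish identically while it is a nonzero multiple of a matrix unit, so evaluating
a vanishing linear combination there kills its coefficient. -/

theorem linearIndependent_of_exists_eval_eq_single {K α M ι : Type*} [DecidableEq ι] [Ring K]
    [IsDomain K] [AddCommGroup M] [Module K M] [Module.IsTorsionFree K M] {f : ι → α → M}
    {c : ι → M} (hc : ∀ i, c i ≠ 0) (hf : ∀ i, ∃ p, (fun j ↦ f j p) = Pi.single i (c i)) :
    LinearIndependent K f := by
  rw [linearIndependent_iff']
  intro t g hg i hi
  obtain ⟨p, hp⟩ := hf i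
  have hgi : g i • c i = 0 := by
    simpa [fun j ↦ congrFun hp j, Pi.single_apply, hi] using congrFun hg p
  exact (smul_eq_zero.mp hgi).resolve_right (hc i)

@[simp]
theorem Matrix.single_eq_zero_iff {m n α : Type*} [DecidableEq m] [DecidableEq n] [Zero α]
    {i : m} {j : n} {c : α} : single i j c = 0 ↔ c = 0 :=
  ⟨fun h ↦ by simpa using congrFun (congrFun h i) j, fun h ↦ h ▸ single_zero i j⟩

section

variable {r s : ℕ} {a b c : Fin r} {x y z : Fin s}

theorem forms_eval_isolates_theta3 (hab : a ≠ b) (hac : a ≠ c) (hbc : b ≠ c) (hxy : x ≠ y)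
    (hxz : x ≠ z) (hyz : y ≠ z) :
    (fun k ↦ ![Theta3F r s, Eta1F r s, Eta2F r s, Eta3F r s] k
      (single b y 1, single a z 1, single c x 1, single y b 1, single x c 1)) =
      (Pi.single 0 (-Matrix.single a z 2) : Fin 4 → Matrix (Fin r) (Fin s) ℂ) := by
  funext k
  fin_cases k <;>
    simp [Theta3F, Eta1F, Eta2F, Eta3F, theta3, eta1, eta2, eta3, ip,
      hbc, hxy, hab.symm, hac.symm, hbc.symm, hxy.symm, hxz.symm, hyz.symm]

theorem forms_eval_isolates_eta1 (hab : a ≠ b) (hac : a ≠ c) (hbc : b ≠ c) (hxy : x ≠ y)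
    (hxz : x ≠ z) (hyz : y ≠ z) :
    (fun k ↦ ![Theta3F r s, Eta1F r s, Eta2F r s, Eta3F r s] k
      (single c y 1, single b x 1, single a z 1, single z c 1, single y a 1)) =
      (Pi.single 1 (Matrix.single b x 2) : Fin 4 → Matrix (Fin r) (Fin s) ℂ) := by
  funext k
  fin_cases k <;>
    simp [Theta3F, Eta1F, Eta2F, Eta3F, theta3, eta1, eta2, eta3, ip,
      hab, hac, hxy, hxz, hyz, hac.symm, hbc.symm, hyz.symm]

theorem forms_eval_isolates_eta2 (hab : a ≠ b) (hac : a ≠ c) (hbc : b ≠ c) (hxy : x ≠ y)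
    (hxz : x ≠ z) (hyz : y ≠ z) :
    (fun k ↦ ![Theta3F r s, Eta1F r s, Eta2F r s, Eta3F r s] k
      (single c z 1, single a x 1, single b y 1, single z c 1, single y a 1)) =
      (Pi.single 2 (-Matrix.single b x 1) : Fin 4 → Matrix (Fin r) (Fin s) ℂ) := by
  funext k
  fin_cases k <;>
    simp [Theta3F, Eta1F, Eta2F, Eta3F, theta3, eta1, eta2, eta3, ip,
      hac, hxy, hxz, hyz, hab.symm, hac.symm, hbc.symm, hyz.symm]

theorem forms_eval_isolates_eta3 (hab : a ≠ b) (hac : a ≠ c) (hbc : b ≠ c) (hxy : x ≠ y)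
    (hxz : x ≠ z) (hyz : y ≠ z) :
    (fun k ↦ ![Theta3F r s, Eta1F r s, Eta2F r s, Eta3F r s] k
      (single c y 1, single a x 1, single b z 1, single z a 1, single y b 1)) =
      (Pi.single 3 (Matrix.single c x 1) : Fin 4 → Matrix (Fin r) (Fin s) ℂ) := by
  funext k
  fin_cases k <;>
    simp [Theta3F, Eta1F, Eta2F, Eta3F, theta3, eta1, eta2, eta3, ip,
      hac, hxy, hxz, hyz, hab.symm, hbc.symm, hyz.symm]

end

/-- For `r ≥ 3` and `s ≥ 3` the four invariant forms `θ₃, η₁, η₂, η₃` are linearly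
independent over `ℂ` in the space of all functions `(M_{r×s})³ × (M_{s×r})² → M_{r×s}`. -/
theorem theta3_eta1_eta2_eta3_linearIndependent (r s : ℕ) (hr : 3 ≤ r) (hs : 3 ≤ s) :
    LinearIndependent ℂ ![Theta3F r s, Eta1F r s, Eta2F r s, Eta3F r s] := by
  obtain ⟨a, b, c, hab, hac, hbc⟩ :=
    Fintype.two_lt_card_iff.mp (by rwa [Fintype.card_fin] : 2 < Fintype.card (Fin r))
  obtain ⟨x, y, z, hxy, hxz, hyz⟩ :=
    Fintype.two_lt_card_iff.mp (by rwa [Fintype.card_fin] : 2 < Fintype.card (Fin s))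
  refine linearIndependent_of_exists_eval_eq_single
    (c := ![-single a z 2, single b x 2, -single b x 1, single c x 1]) (fun i ↦ ?_) (fun i ↦ ?_)
  · fin_cases i <;> simp
  · fin_cases i
    exacts [⟨_, forms_eval_isolates_theta3 hab hac hbc hxy hxz hyz⟩,
      ⟨_, forms_eval_isolates_eta1 hab hac hbc hxy hxz hyz⟩,
      ⟨_, forms_eval_isolates_eta2 hab hac hbc hxy hxz hyz⟩,
      ⟨_, forms_eval_isolates_eta3 hab hac hbc hxy hxz hyz⟩]
end

section
/- Let r = 2 and s ≥ 3. Then the three functions θ3, η1, η2 are linearly independent over ℂ in the complex vector space of all functions (M_{2×s})³ × (M_{s×2})² → M_{2×s}, and the pointwise identity η3 = η2 + (1/2)·η1 − (1/2)·θ3 holds, i.e. for all u1, u2, u3 ∈ M_{2×s} and all v1, v2 ∈ M_{s×2} one has η3(u1,u2,u3,v1,v2) = η2(u1,u2,u3,v1,v2) + (1/2)·η1(u1,u2,u3,v1,v2) − (1/2)·θ3(u1,u2,u3,v1,v2). -/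
open Matrix

section AuxInvariantForms

set_option maxHeartbeats 1000000

private theorem keyCH {s : ℕ} (X11 X21 X31 X12 X22 X32 : Matrix (Fin 2) (Fin 2) ℂ)
    (u1 u2 u3 : Matrix (Fin 2) (Fin s) ℂ) :
    X11 * X22 * u3 + X21 * X32 * u1 + X31 * X12 * u2
      - X21 * X12 * u3 - X31 * X22 * u1 - X11 * X32 * u2
      - X12 * X21 * u3 - X22 * X31 * u1 - X32 * X11 * u2
      + X22 * X11 * u3 + X32 * X21 * u1 + X12 * X31 * u2
    =
    (X11.trace • (X22 * u3) + X21.trace • (X32 * u1) + X31.trace • (X12 * u2)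
      - X21.trace • (X12 * u3) - X31.trace • (X22 * u1) - X11.trace • (X32 * u2)
      - X12.trace • (X21 * u3) - X22.trace • (X31 * u1) - X32.trace • (X11 * u2)
      + X22.trace • (X11 * u3) + X32.trace • (X21 * u1) + X12.trace • (X31 * u2))
    + (1 / 2 : ℂ) • ((2 : ℂ) • ((X11 * X22).trace • u3 + (X21 * X32).trace • u1
        + (X31 * X12).trace • u2 - (X21 * X12).trace • u3 - (X31 * X22).trace • u1
        - (X11 * X32).trace • u2))
    - (1 / 2 : ℂ) • ((2 : ℂ) • ((X21.trace * X32.trace - X22.trace * X31.trace) • u1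
        - (X11.trace * X32.trace - X12.trace * X31.trace) • u2
        + (X11.trace * X22.trace - X12.trace * X21.trace) • u3)) := by
  ext i j
  fin_cases i <;>
    (simp only [Matrix.add_apply, Matrix.sub_apply, Matrix.smul_apply, Matrix.mul_apply,
      Matrix.trace, Matrix.diag, Fin.sum_univ_two, smul_eq_mul, Fin.zero_eta, Fin.mk_one,
      Fin.isValue]; ring)

private theorem eta3_identity {s : ℕ} (u1 u2 u3 : Matrix (Fin 2) (Fin s) ℂ)
    (v1 v2 : Matrix (Fin s) (Fin 2) ℂ) :
    eta3 u1 u2 u3 v1 v2 =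
      eta2 u1 u2 u3 v1 v2 + (1 / 2 : ℂ) • eta1 u1 u2 u3 v1 v2
        - (1 / 2 : ℂ) • theta3 u1 u2 u3 v1 v2 := by
  have h := keyCH (u1*v1) (u2*v1) (u3*v1) (u1*v2) (u2*v2) (u3*v2) u1 u2 u3
  simp only [eta3, eta2, eta1, theta3, ip, Matrix.mul_assoc] at h ⊢
  exact h

private def emb (s : ℕ) (hs : 3 ≤ s) : Fin 3 → Fin s := fun a => ⟨a.1, a.2.trans_le hs⟩

private noncomputable def Pm (s : ℕ) (hs : 3 ≤ s) : Matrix (Fin 3) (Fin s) ℂ :=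
  Matrix.of fun a j => if j = emb s hs a then 1 else 0

private theorem emb_inj (s : ℕ) (hs : 3 ≤ s) {a b : Fin 3}
    (h : emb s hs a = emb s hs b) : a = b := by
  simpa [emb, Fin.ext_iff] using h

private theorem hPPt (s : ℕ) (hs : 3 ≤ s) : Pm s hs * (Pm s hs)ᵀ = 1 := by
  ext a b
  simp only [Pm, Matrix.mul_apply, Matrix.transpose_apply, Matrix.of_apply, Matrix.one_apply,
    ite_mul, one_mul, zero_mul]
  rw [Finset.sum_ite_eq' Finset.univ (emb s hs a)]
  simp only [Finset.mem_univ, if_true]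
  by_cases h : a = b
  · subst h; simp
  · rw [if_neg (fun h' => h (emb_inj s hs h')), if_neg h]

private theorem hPleft (s : ℕ) (hs : 3 ≤ s) {n : Type*} (M : Matrix (Fin 3) n ℂ) :
    Pm s hs * ((Pm s hs)ᵀ * M) = M := by
  rw [← Matrix.mul_assoc, hPPt, Matrix.one_mul]

private theorem hrow (s : ℕ) (hs : 3 ≤ s) (M : Matrix (Fin 2) (Fin 3) ℂ) (i : Fin 2)
    (a : Fin 3) : (M * Pm s hs) i (emb s hs a) = M i a := by
  simp only [Matrix.mul_apply, Pm, Matrix.of_apply]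
  rw [Finset.sum_eq_single a]
  · simp
  · intro b _ hb
    rw [if_neg (fun h' => hb (emb_inj s hs h'.symm)), mul_zero]
  · simp

private theorem theta3P (s : ℕ) (hs : 3 ≤ s) (U1 U2 U3 : Matrix (Fin 2) (Fin 3) ℂ)
    (V1 V2 : Matrix (Fin 3) (Fin 2) ℂ) :
    theta3 (U1 * Pm s hs) (U2 * Pm s hs) (U3 * Pm s hs) ((Pm s hs)ᵀ * V1) ((Pm s hs)ᵀ * V2)
      = theta3 U1 U2 U3 V1 V2 * Pm s hs := by
  simp only [theta3, ip, Matrix.mul_assoc, hPleft s hs, Matrix.add_mul, Matrix.sub_mul,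
    Matrix.smul_mul]

private theorem eta1P (s : ℕ) (hs : 3 ≤ s) (U1 U2 U3 : Matrix (Fin 2) (Fin 3) ℂ)
    (V1 V2 : Matrix (Fin 3) (Fin 2) ℂ) :
    eta1 (U1 * Pm s hs) (U2 * Pm s hs) (U3 * Pm s hs) ((Pm s hs)ᵀ * V1) ((Pm s hs)ᵀ * V2)
      = eta1 U1 U2 U3 V1 V2 * Pm s hs := by
  simp only [eta1, Matrix.mul_assoc, hPleft s hs, Matrix.add_mul, Matrix.sub_mul,
    Matrix.smul_mul]

private theorem eta2P (s : ℕ) (hs : 3 ≤ s) (U1 U2 U3 : Matrix (Fin 2) (Fin 3) ℂ)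
    (V1 V2 : Matrix (Fin 3) (Fin 2) ℂ) :
    eta2 (U1 * Pm s hs) (U2 * Pm s hs) (U3 * Pm s hs) ((Pm s hs)ᵀ * V1) ((Pm s hs)ᵀ * V2)
      = eta2 U1 U2 U3 V1 V2 * Pm s hs := by
  simp only [eta2, ip, Matrix.mul_assoc, hPleft s hs, Matrix.add_mul, Matrix.sub_mul,
    Matrix.smul_mul]

private theorem hTval : theta3 !![0,0,1;0,0,0] !![1,0,1;1,0,0] !![1,0,0;0,1,1]
    !![1,0;0,1;0,0] !![1,0;1,1;0,1] = !![0,0,2;0,0,0] := by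
  ext i j
  fin_cases i <;> fin_cases j <;>
    simp [theta3, ip, Matrix.trace, Matrix.diag, Matrix.mul_apply, Fin.sum_univ_two,
      Fin.sum_univ_three] <;> norm_num

private theorem hE1val : eta1 !![0,0,1;0,0,0] !![1,0,1;1,0,0] !![1,0,0;0,1,1]
    !![1,0;0,1;0,0] !![1,0;1,1;0,1] = !![-2,0,0;0,-2,-2] := by
  ext i j
  fin_cases i <;> fin_cases j <;>
    simp [eta1, Matrix.trace, Matrix.diag, Matrix.mul_apply, Fin.sum_univ_two,
      Fin.sum_univ_three] <;> norm_num

private theorem hE2val : eta2 !![0,0,1;0,0,0] !![1,0,1;1,0,0] !![1,0,0;0,1,1]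
    !![1,0;0,1;0,0] !![1,0;1,1;0,1] = !![2,-1,0;0,0,2] := by
  ext i j
  fin_cases i <;> fin_cases j <;>
    simp [eta2, ip, Matrix.trace, Matrix.diag, Matrix.mul_apply, Fin.sum_univ_two,
      Fin.sum_univ_three] <;> norm_num

end AuxInvariantForms

/-- For `r = 2` and `s ≥ 3` the three invariant forms `θ₃, η₁, η₂` are linearly independent
over `ℂ` in the space of all functions `(M_{2×s})³ × (M_{s×2})² → M_{2×s}`, and the pointwise
identity `η₃ = η₂ + (1/2)·η₁ − (1/2)·θ₃` holds. -/
theorem theta3_eta1_eta2_linearIndependent_and_eta3_eq_of_r_eq_two (s : ℕ) (hs : 3 ≤ s) :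
    LinearIndependent ℂ ![Theta3F 2 s, Eta1F 2 s, Eta2F 2 s] ∧
      ∀ (u1 u2 u3 : Matrix (Fin 2) (Fin s) ℂ) (v1 v2 : Matrix (Fin s) (Fin 2) ℂ),
        eta3 u1 u2 u3 v1 v2 =
          eta2 u1 u2 u3 v1 v2 + (1 / 2 : ℂ) • eta1 u1 u2 u3 v1 v2
            - (1 / 2 : ℂ) • theta3 u1 u2 u3 v1 v2 := by
  constructor
  · rw [Fintype.linearIndependent_iff]
    intro g hg
    have h := congrFun hg
      ((!![0,0,1;0,0,0] : Matrix (Fin 2) (Fin 3) ℂ) * Pm s hs,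
        (!![1,0,1;1,0,0] : Matrix (Fin 2) (Fin 3) ℂ) * Pm s hs,
        (!![1,0,0;0,1,1] : Matrix (Fin 2) (Fin 3) ℂ) * Pm s hs,
        (Pm s hs)ᵀ * (!![1,0;0,1;0,0] : Matrix (Fin 3) (Fin 2) ℂ),
        (Pm s hs)ᵀ * (!![1,0;1,1;0,1] : Matrix (Fin 3) (Fin 2) ℂ))
    simp only [Fin.sum_univ_three, Matrix.cons_val_zero, Matrix.cons_val_one, Matrix.head_cons, Matrix.cons_val_two, Matrix.tail_cons,
      Pi.add_apply, Pi.smul_apply, Pi.zero_apply, Theta3F, Eta1F, Eta2F] at h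
    rw [theta3P s hs, eta1P s hs, eta2P s hs, hTval, hE1val, hE2val] at h
    have key : ∀ a : Fin 3,
        g 0 * (!![0,0,2;0,0,0] : Matrix (Fin 2) (Fin 3) ℂ) 0 a
          + g 1 * (!![-2,0,0;0,-2,-2] : Matrix (Fin 2) (Fin 3) ℂ) 0 a
          + g 2 * (!![2,-1,0;0,0,2] : Matrix (Fin 2) (Fin 3) ℂ) 0 a = 0 := by
      intro a
      have h0 := congrFun (congrFun h 0) (emb s hs a)
      rw [Matrix.add_apply, Matrix.add_apply, Matrix.smul_apply, Matrix.smul_apply,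
        Matrix.smul_apply, Matrix.zero_apply, hrow s hs, hrow s hs, hrow s hs] at h0
      simpa using h0
    have k0 := key 0
    have k1 := key 1
    have k2 := key 2
    norm_num at k0 k1 k2
    intro i
    fin_cases i
    · simpa using k2
    · simpa [k1] using k0
    · exact k1
  · intro u1 u2 u3 v1 v2
    exact eta3_identity u1 u2 u3 v1 v2
end

section
/- Let s = 2 and r ≥ 3. Then the three functions θ3, η1, η2 are linearly independent over ℂ in the complex vector space of all functions (M_{r×2})³ × (M_{2×r})² → M_{r×2}, and the pointwise identity η3 = −η2 − (1/2)·η1 − (1/2)·θ3 holds, i.e. for all u1, u2, u3 ∈ M_{r×2} and all v1, v2 ∈ M_{2×r} one has η3(u1,u2,u3,v1,v2) = −η2(u1,u2,u3,v1,v2) − (1/2)·η1(u1,u2,u3,v1,v2) − (1/2)·θ3(u1,u2,u3,v1,v2). -/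
open Matrix

/-! Over `M₂(ℂ)` the polarized Cayley–Hamilton identity
`bc + cb = tr b · c + tr c · b + (tr(bc) − tr b tr c) · 1` holds. Grouping the twelve words of `η₃`
by their left factor writes `η₃` as the cyclic sum `Σ uᵢ (bⱼcₖ + cₖbⱼ − bₖcⱼ − cⱼbₖ)` with
`bⱼ = v₁uⱼ`, `cₖ = v₂uₖ`; expanding each anticommutator yields exactly `−η₂ − ½η₁ − ½θ₃`.
For linear independence, three points built from matrix units over three distinct row indices
separate the forms: at each of them one matrix entry vanishes for two of the forms but not for
the third. -/

theorem Matrix.mul_add_mul_swap_fin_two {R : Type*} [CommRing R] (b c : Matrix (Fin 2) (Fin 2) R) :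
    b * c + c * b = b.trace • c + c.trace • b + ((b * c).trace - b.trace * c.trace) • 1 := by
  ext i j
  fin_cases i <;> fin_cases j <;>
    simp only [Fin.zero_eta, Fin.mk_one, Fin.isValue, Matrix.add_apply, Matrix.smul_apply,
      mul_apply, Fin.sum_univ_two, trace_fin_two, smul_eq_mul, one_apply_eq, ne_eq, zero_ne_one,
      one_ne_zero, not_false_eq_true, one_apply_ne, mul_one, mul_zero, add_zero] <;>
    ring

theorem Matrix.trace_mul_mul_mul_rotate {R l m n o : Type*} [CommSemiring R] [Fintype l]
    [Fintype m] [Fintype n] [Fintype o] (a : Matrix l m R) (b : Matrix m n R) (c : Matrix n o R)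
    (d : Matrix o l R) :
    (a * b * c * d).trace = (b * c * (d * a)).trace := by
  rw [Matrix.mul_assoc, Matrix.mul_assoc, trace_mul_comm, Matrix.mul_assoc, Matrix.mul_assoc,
    Matrix.mul_assoc]

theorem ip_eq_trace_mul {r s : ℕ} (u : Matrix (Fin r) (Fin s) ℂ)
    (v : Matrix (Fin s) (Fin r) ℂ) :
    ip u v = (v * u).trace :=
  trace_mul_comm u v

theorem eta3_eq_of_two {r : ℕ} (u1 u2 u3 : Matrix (Fin r) (Fin 2) ℂ)
    (v1 v2 : Matrix (Fin 2) (Fin r) ℂ) :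
    eta3 u1 u2 u3 v1 v2 =
      -eta2 u1 u2 u3 v1 v2 - (1 / 2 : ℂ) • eta1 u1 u2 u3 v1 v2
        - (1 / 2 : ℂ) • theta3 u1 u2 u3 v1 v2 := by
  have eta3_eq_sum_anticommutators : eta3 u1 u2 u3 v1 v2 =
      u1 * (v1 * u2 * (v2 * u3) + v2 * u3 * (v1 * u2)
          - (v1 * u3 * (v2 * u2) + v2 * u2 * (v1 * u3)))
      + u2 * (v1 * u3 * (v2 * u1) + v2 * u1 * (v1 * u3)
          - (v1 * u1 * (v2 * u3) + v2 * u3 * (v1 * u1)))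
      + u3 * (v1 * u1 * (v2 * u2) + v2 * u2 * (v1 * u1)
          - (v1 * u2 * (v2 * u1) + v2 * u1 * (v1 * u2))) := by
    simp only [eta3, Matrix.mul_add, Matrix.mul_sub, Matrix.mul_assoc]
    abel
  rw [eta3_eq_sum_anticommutators, eta1, eta2, theta3]
  simp only [Matrix.mul_add_mul_swap_fin_two, ip_eq_trace_mul, Matrix.trace_mul_mul_mul_rotate]
  simp only [Matrix.mul_add, Matrix.mul_sub, Matrix.mul_smul, Matrix.mul_one, Matrix.mul_assoc]
  module

theorem LinearIndependent.of_dual_apply_eq_single {ι K M : Type*} [CommRing K] [NoZeroDivisors K]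
    [AddCommGroup M] [Module K M] [DecidableEq ι] {v : ι → M} (φ : ι → Module.Dual K M)
    {c : ι → K} (hc : ∀ a, c a ≠ 0)
    (hφ : ∀ a, (fun b => φ a (v b)) = Pi.single a (c a)) :
    LinearIndependent K v := by
  rw [linearIndependent_iff']
  intro s g hg a ha
  have hφa : ∑ b ∈ s, g b * (Pi.single a (c a) : ι → K) b = 0 := by
    simpa [← hφ a] using congrArg (φ a) hg
  rw [Finset.sum_eq_single_of_mem a ha (fun b _ hb => by simp [hb]), Pi.single_eq_same] at hφa
  exact (mul_eq_zero.mp hφa).resolve_right (hc a)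

def entryAt {R X m n : Type*} [CommSemiring R] (p : X) (a : m) (b : n) :
    Module.Dual R (X → Matrix m n R) :=
  entryLinearMap R R a b ∘ₗ LinearMap.proj p

section TestPoints

variable {r : ℕ} {i j k : Fin r}

theorem entryAt_isolates_theta3 (hij : i ≠ j) :
    (fun l => entryAt (single i 0 1, single i 1 1, single j 0 1, single 0 j 1, single 1 i 1) i 0
      (![Theta3F r 2, Eta1F r 2, Eta2F r 2] l)) = Pi.single 0 (-2) := by
  ext l
  fin_cases l <;>
    simp [entryAt, Theta3F, Eta1F, Eta2F, theta3, eta1, eta2, ip, trace_single_eq_of_ne, hij,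
      hij.symm]

theorem entryAt_isolates_eta1 (hij : i ≠ j) (hik : i ≠ k) (hjk : j ≠ k) :
    (fun l => entryAt (single i 0 1, single j 0 1, single k 1 1, single 0 k 1, single 1 i 1) j 0
      (![Theta3F r 2, Eta1F r 2, Eta2F r 2] l)) = Pi.single 1 (-2) := by
  ext l
  fin_cases l <;>
    simp [entryAt, Theta3F, Eta1F, Eta2F, theta3, eta1, eta2, ip, trace_single_eq_of_ne, hij,
      hij.symm, hik, hik.symm, hjk, hjk.symm]

theorem entryAt_isolates_eta2 (hij : i ≠ j) (hik : i ≠ k) (hjk : j ≠ k) :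
    (fun l => entryAt (single i 0 1, single j 0 1, single k 1 1, single 0 i 1, single 0 k 1) j 1
      (![Theta3F r 2, Eta1F r 2, Eta2F r 2] l)) = Pi.single 2 1 := by
  ext l
  fin_cases l <;>
    simp [entryAt, Theta3F, Eta1F, Eta2F, theta3, eta1, eta2, ip, trace_single_eq_of_ne, hij,
      hij.symm, hik, hik.symm, hjk, hjk.symm]

end TestPoints

/-- For `s = 2` and `r ≥ 3` the three invariant forms `θ₃, η₁, η₂` are linearly independent
over `ℂ` in the space of all functions `(M_{r×2})³ × (M_{2×r})² → M_{r×2}`, and the pointwise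
identity `η₃ = −η₂ − (1/2)·η₁ − (1/2)·θ₃` holds. -/
theorem theta3_eta1_eta2_linearIndependent_and_eta3_eq_of_s_eq_two (r : ℕ) (hr : 3 ≤ r) :
    LinearIndependent ℂ ![Theta3F r 2, Eta1F r 2, Eta2F r 2] ∧
      ∀ (u1 u2 u3 : Matrix (Fin r) (Fin 2) ℂ) (v1 v2 : Matrix (Fin 2) (Fin r) ℂ),
        eta3 u1 u2 u3 v1 v2 =
          -eta2 u1 u2 u3 v1 v2 - (1 / 2 : ℂ) • eta1 u1 u2 u3 v1 v2
            - (1 / 2 : ℂ) • theta3 u1 u2 u3 v1 v2 := by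
  refine ⟨?_, eta3_eq_of_two⟩
  let i : Fin r := ⟨0, by omega⟩
  let j : Fin r := ⟨1, by omega⟩
  let k : Fin r := ⟨2, by omega⟩
  have hij : i ≠ j := by simp [i, j, Fin.ext_iff]
  have hik : i ≠ k := by simp [i, k, Fin.ext_iff]
  have hjk : j ≠ k := by simp [j, k, Fin.ext_iff]
  refine LinearIndependent.of_dual_apply_eq_single (c := ![-2, -2, 1])
    ![entryAt (single i 0 1, single i 1 1, single j 0 1, single 0 j 1, single 1 i 1) i 0,
      entryAt (single i 0 1, single j 0 1, single k 1 1, single 0 k 1, single 1 i 1) j 0,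
      entryAt (single i 0 1, single j 0 1, single k 1 1, single 0 i 1, single 0 k 1) j 1]
    (fun a => by fin_cases a <;> norm_num) (fun a => ?_)
  fin_cases a
  exacts [entryAt_isolates_theta3 hij, entryAt_isolates_eta1 hij hik hjk,
    entryAt_isolates_eta2 hij hik hjk]
end

section
/- Let r = s = 2. Then the two functions θ3 and η1 are linearly independent over ℂ in the complex vector space of all functions (M_{2×2})³ × (M_{2×2})² → M_{2×2}, and the pointwise identities η2 = −(1/2)·η1 and η3 = −(1/2)·θ3 hold, i.e. for all u1, u2, u3, v1, v2 ∈ M_{2×2} one has η2(u1,u2,u3,v1,v2) = −(1/2)·η1(u1,u2,u3,v1,v2) and η3(u1,u2,u3,v1,v2) = −(1/2)·θ3(u1,u2,u3,v1,v2). -/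
open Matrix

set_option maxHeartbeats 1000000 in
/-- For `r = s = 2` the two invariant forms `θ₃, η₁` are linearly independent over `ℂ`
in the space of all functions `(M_{2×2})³ × (M_{2×2})² → M_{2×2}`, and the pointwise
identities `η₂ = −(1/2)·η₁` and `η₃ = −(1/2)·θ₃` hold. -/
theorem theta3_eta1_linearIndependent_and_relations_of_r_eq_s_eq_two :
    LinearIndependent ℂ ![Theta3F 2 2, Eta1F 2 2] ∧
      (∀ (u1 u2 u3 v1 v2 : Matrix (Fin 2) (Fin 2) ℂ),
        eta2 u1 u2 u3 v1 v2 = -((1 / 2 : ℂ) • eta1 u1 u2 u3 v1 v2)) ∧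
      (∀ (u1 u2 u3 v1 v2 : Matrix (Fin 2) (Fin 2) ℂ),
        eta3 u1 u2 u3 v1 v2 = -((1 / 2 : ℂ) • theta3 u1 u2 u3 v1 v2)) := by
  refine ⟨?_, ?_, ?_⟩
  · rw [LinearIndependent.pair_iff]
    intro a b hab
    constructor
    · have h := congrFun (congrFun (congrFun hab
        ((!![1,0;0,0] : Matrix (Fin 2) (Fin 2) ℂ), !![0,1;0,0], !![0,0;1,0],
          !![0,1;0,0], !![0,0;1,0])) 0) 0
      simp only [Pi.add_apply, Pi.smul_apply, Pi.zero_apply, Theta3F, Eta1F, theta3, eta1, ip,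
        Matrix.trace, Matrix.diag, Matrix.mul_apply, Fin.sum_univ_two, Matrix.smul_apply,
        Matrix.add_apply, Matrix.sub_apply, Matrix.cons_val', Matrix.cons_val_zero,
        Matrix.cons_val_one, Matrix.head_cons, Matrix.head_fin_const, Matrix.empty_val',
        Matrix.cons_val_fin_one, Matrix.of_apply, smul_eq_mul] at h
      norm_num at h
      exact h
    · have h := congrFun (congrFun (congrFun hab
        ((!![1,0;0,0] : Matrix (Fin 2) (Fin 2) ℂ), !![0,1;0,0], !![0,0;1,0],
          !![1,0;0,0], !![0,0;0,1])) 0) 0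
      simp only [Pi.add_apply, Pi.smul_apply, Pi.zero_apply, Theta3F, Eta1F, theta3, eta1, ip,
        Matrix.trace, Matrix.diag, Matrix.mul_apply, Fin.sum_univ_two, Matrix.smul_apply,
        Matrix.add_apply, Matrix.sub_apply, Matrix.cons_val', Matrix.cons_val_zero,
        Matrix.cons_val_one, Matrix.head_cons, Matrix.head_fin_const, Matrix.empty_val',
        Matrix.cons_val_fin_one, Matrix.of_apply, smul_eq_mul] at h
      norm_num at h
      exact h
  · intro u1 u2 u3 v1 v2
    ext i j
    fin_cases i <;> fin_cases j <;>
      · simp only [eta2, eta1, ip, Matrix.trace, Matrix.diag, Matrix.mul_apply, Fin.sum_univ_two,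
          Matrix.smul_apply, Matrix.add_apply, Matrix.sub_apply, Matrix.neg_apply, Fin.mk_zero, Fin.mk_one, Fin.isValue, smul_eq_mul]
        ring
  · intro u1 u2 u3 v1 v2
    ext i j
    fin_cases i <;> fin_cases j <;>
      · simp only [eta3, theta3, ip, Matrix.trace, Matrix.diag, Matrix.mul_apply, Fin.sum_univ_two,
          Matrix.smul_apply, Matrix.add_apply, Matrix.sub_apply, Matrix.neg_apply, Fin.mk_zero, Fin.mk_one, Fin.isValue, smul_eq_mul]
        ring
end

section
/- Let V be a real inner product space, I a finite nonempty index set, and (α_i)_{i∈I} a linearly independent family of vectors in V such that ⟪α_i, α_j⟫ ≤ 0 for all i ≠ j, and such that I cannot be partitioned into two nonempty subsets I₁, I₂ with ⟪α_i, α_j⟫ = 0 for all i ∈ I₁ and j ∈ I₂. If λ = Σ_{i∈I} k_i α_i with real coefficients k_i satisfies λ ≠ 0 and ⟪λ, α_i⟫ ≥ 0 for every i ∈ I, then k_i > 0 for every i ∈ I. -/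
open scoped RealInnerProductSpace

/-- Let `(α_i)_{i ∈ I}` be a finite linearly independent family of vectors in a real
inner product space with pairwise non-positive inner products, whose "graph" is
connected (no partition of `I` into two nonempty mutually orthogonal parts). If
`λ = Σ k_i • α_i` is nonzero and `⟪λ, α_i⟫ ≥ 0` for every `i`, then `k_i > 0` for
every `i`. -/
theorem coeffs_pos_of_dominant (V : Type*) [NormedAddCommGroup V]
    [InnerProductSpace ℝ V] (I : Type*) [Fintype I] [Nonempty I] (α : I → V)
    (hindep : LinearIndependent ℝ α)
    (hobtuse : ∀ i j : I, i ≠ j → ⟪α i, α j⟫ ≤ 0)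
    (hconn : ¬ ∃ I₁ I₂ : Set I, I₁.Nonempty ∧ I₂.Nonempty ∧ Disjoint I₁ I₂ ∧
        I₁ ∪ I₂ = Set.univ ∧ ∀ i ∈ I₁, ∀ j ∈ I₂, ⟪α i, α j⟫ = 0)
    (k : I → ℝ) (hne : (∑ i, k i • α i) ≠ 0)
    (hdom : ∀ i : I, 0 ≤ ⟪∑ j, k j • α j, α i⟫) :
    ∀ i : I, 0 < k i := by
  classical
  set lam := ∑ i, k i • α i with hlam
  -- Step 1 : all coefficients nonnegative
  have hk : ∀ i, 0 ≤ k i := by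
    by_contra h
    push_neg at h
    obtain ⟨i₀, hi₀⟩ := h
    set g : I → ℝ := fun i => if k i < 0 then k i else 0 with hg
    set μ := ∑ i, g i • α i with hμ
    have hg_nonpos : ∀ i, g i ≤ 0 := by
      intro i; simp only [hg]
      split
      · exact le_of_lt ‹_›
      · exact le_refl 0
    have hkg : ∀ i, 0 ≤ k i - g i := by
      intro i; simp only [hg]
      split
      · simp
      · simpa using not_lt.mp ‹¬ k i < 0›
    have hzero : ∀ i, (k i - g i) * g i = 0 := by
      intro i; simp only [hg]
      split
      · ring
      · ring
    have h1 : ⟪lam, μ⟫ ≤ 0 := by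
      rw [hμ, inner_sum]
      apply Finset.sum_nonpos
      intro i _
      rw [real_inner_smul_right]
      exact mul_nonpos_of_nonpos_of_nonneg (hg_nonpos i) (hdom i)
    have h2 : 0 ≤ ⟪lam - μ, μ⟫ := by
      have hd : lam - μ = ∑ i, (k i - g i) • α i := by
        rw [hlam, hμ, ← Finset.sum_sub_distrib]
        exact Finset.sum_congr rfl fun i _ => (sub_smul _ _ _).symm
      rw [hd, sum_inner]
      apply Finset.sum_nonneg
      intro i _
      rw [real_inner_smul_left, hμ, inner_sum, Finset.mul_sum]
      apply Finset.sum_nonneg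
      intro j _
      rw [real_inner_smul_right]
      rcases eq_or_ne j i with rfl | hji
      · rw [← mul_assoc, hzero j]
        simp
      · rw [← mul_assoc, mul_comm (k i - g i) (g j), mul_assoc]
        have := mul_nonpos_of_nonneg_of_nonpos (hkg i) (hobtuse i j hji.symm)
        nlinarith [hg_nonpos j]
    have hμμ : ⟪μ, μ⟫ ≤ 0 := by
      have : ⟪μ, μ⟫ = ⟪lam, μ⟫ - ⟪lam - μ, μ⟫ := by
        rw [inner_sub_left]; ring
      rw [this]; linarith
    have hμ0 : μ = 0 := by
      have := real_inner_self_nonpos.mp hμμ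
      exact this
    have := Fintype.linearIndependent_iff.mp hindep g (by rw [← hμ, hμ0]) i₀
    rw [hg] at this
    simp only [if_pos hi₀] at this
    exact absurd this (ne_of_lt hi₀)
  -- Step 2 : strict positivity
  intro i
  rcases (hk i).lt_or_eq with h | h
  · exact h
  exfalso
  apply hconn
  have hexp : ∀ i, ⟪lam, α i⟫ = ∑ j, k j * ⟪α j, α i⟫ := by
    intro i
    rw [hlam, sum_inner]
    exact Finset.sum_congr rfl fun j _ => real_inner_smul_left _ _ _
  -- the positive part is nonempty
  have hP : ∃ j, 0 < k j := by
    by_contra hP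
    push_neg at hP
    apply hne
    rw [← hlam] at *
    have : ∀ j, k j = 0 := fun j => le_antisymm (hP j) (hk j)
    rw [hlam]
    exact Finset.sum_eq_zero fun j _ => by rw [this j, zero_smul]
  obtain ⟨j₀, hj₀⟩ := hP
  -- orthogonality of zero-part and positive-part
  have key : ∀ i, k i = 0 → ∀ j, 0 < k j → ⟪α i, α j⟫ = 0 := by
    intro i hi j hj
    have hterm_nonpos : ∀ m ∈ Finset.univ, k m * ⟪α m, α i⟫ ≤ 0 := by
      intro m _
      rcases eq_or_ne m i with rfl | hmi
      · rw [hi, zero_mul]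
      · exact mul_nonpos_of_nonneg_of_nonpos (hk m) (hobtuse m i hmi)
    have hsum0 : ∑ m, k m * ⟪α m, α i⟫ = 0 :=
      le_antisymm (Finset.sum_nonpos hterm_nonpos) (by rw [← hexp i]; exact hdom i)
    have := (Finset.sum_eq_zero_iff_of_nonpos hterm_nonpos).mp hsum0 j (Finset.mem_univ j)
    have hinner : ⟪α j, α i⟫ = 0 := by
      rcases mul_eq_zero.mp this with h' | h'
      · exact absurd h' (ne_of_gt hj)
      · exact h'
    rw [real_inner_comm] at hinner
    exact hinner
  refine ⟨{m | k m = 0}, {m | 0 < k m}, ⟨i, h.symm⟩, ⟨j₀, hj₀⟩, ?_, ?_, ?_⟩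
  · rw [Set.disjoint_left]
    intro m hm hm'
    simp only [Set.mem_setOf_eq] at hm hm'
    rw [hm] at hm'
    exact lt_irrefl 0 hm'
  · ext m
    simp only [Set.mem_union, Set.mem_setOf_eq, Set.mem_univ, iff_true]
    rcases (hk m).lt_or_eq with h' | h'
    · exact Or.inr h'
    · exact Or.inl h'.symm
  · intro a ha b hb
    exact key a ha b hb
end
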